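/- arXiv:0810.0748 — 2 statements merged into one kernel-verified Lean document; each statement's English description precedes it below -/
import Mathlib

section
/- Let k ∈ ℝ, Ω, y, y0 ∈ ℝ³, t0 ∈ ℝ, and let R̂ : ℝ → Matrix (Fin 3) (Fin 3) ℝ satisfy HasDerivAt R̂ (R̂ t0 * skew Ω) t0, where skew Ω is the skew-symmetric matrix with skew Ω *ᵥ z = Ω × z. Set ŷ = (R̂ t0)ᵀ *ᵥ y0. Then the lifted cost along the trajectory, t ↦ (k/2) ‖(R̂ t)ᵀ *ᵥ y0 - y‖², has derivative at t0 equal to k ⟪Ω, ŷ × y⟫. In particular the derivative vanishes for all directions Ω orthogonal to ŷ × y, reflecting that the gradient of the lifted cost is proportional to ŷ × y. -/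
open Matrix RealInnerProductSpace

/-- The cross product on ℝ³ (realised as `EuclideanSpace ℝ (Fin 3)`, which carries the
Euclidean norm and inner product). -/
def cross (a b : EuclideanSpace ℝ (Fin 3)) : EuclideanSpace ℝ (Fin 3) := WithLp.toLp 2 (crossProduct a.ofLp b.ofLp)

/-- Matrix-vector multiplication `A *ᵥ v` on ℝ³ realised as `EuclideanSpace ℝ (Fin 3)`. -/
def mv (A : Matrix (Fin 3) (Fin 3) ℝ) (v : EuclideanSpace ℝ (Fin 3)) :
    EuclideanSpace ℝ (Fin 3) := WithLp.toLp 2 (A *ᵥ v.ofLp)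

/-- `skew ω` is the skew-symmetric matrix with `skew ω *ᵥ v = ω × v`. -/
def skew (ω : EuclideanSpace ℝ (Fin 3)) : Matrix (Fin 3) (Fin 3) ℝ :=
  !![0, -ω 2, ω 1; ω 2, 0, -ω 0; -ω 1, ω 0, 0]

attribute [local instance] Matrix.normedAddCommGroup Matrix.normedSpace

noncomputable def Lmap (y0 : EuclideanSpace ℝ (Fin 3)) :
    Matrix (Fin 3) (Fin 3) ℝ →L[ℝ] EuclideanSpace ℝ (Fin 3) :=
  LinearMap.toContinuousLinearMap
    { toFun := fun A => mv Aᵀ y0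
      map_add' := by
        intro A B
        simp [mv, Matrix.transpose_add, Matrix.add_mulVec]
      map_smul' := by
        intro c A
        simp [mv, Matrix.transpose_smul, Matrix.smul_mulVec] }


/-- Along a trajectory of `R̂' = R̂ (Ω)×` at time `t0`, the lifted cost
`t ↦ (k/2) ‖(R̂ t)ᵀ y0 - y‖²` has derivative `k ⟪Ω, ŷ × y⟫`, where `ŷ = (R̂ t0)ᵀ y0`;
so the gradient of the lifted cost is proportional to `ŷ × y`. -/
theorem lifted_cost_derivative
    (k : ℝ) (Ω y y0 : EuclideanSpace ℝ (Fin 3)) (t0 : ℝ)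
    (Rhat : ℝ → Matrix (Fin 3) (Fin 3) ℝ)
    (hR : HasDerivAt Rhat (Rhat t0 * skew Ω) t0)
    (yhat : EuclideanSpace ℝ (Fin 3)) (hyhat : yhat = mv (Rhat t0)ᵀ y0) :
    HasDerivAt (fun t : ℝ => (k / 2) * ‖mv (Rhat t)ᵀ y0 - y‖ ^ 2)
      (k * ⟪Ω, cross yhat y⟫) t0 := by
  have hg : HasDerivAt (fun t => mv (Rhat t)ᵀ y0 - y)
      (mv (Rhat t0 * skew Ω)ᵀ y0) t0 := by
    have h1 : HasDerivAt (fun t => Lmap y0 (Rhat t)) (Lmap y0 (Rhat t0 * skew Ω)) t0 :=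
      (Lmap y0).hasFDerivAt.comp_hasDerivAt t0 hR
    exact h1.sub_const y
  have hin : HasDerivAt (fun t => ⟪mv (Rhat t)ᵀ y0 - y, mv (Rhat t)ᵀ y0 - y⟫)
      (⟪mv (Rhat t0)ᵀ y0 - y, mv (Rhat t0 * skew Ω)ᵀ y0⟫
        + ⟪mv (Rhat t0 * skew Ω)ᵀ y0, mv (Rhat t0)ᵀ y0 - y⟫) t0 :=
    hg.inner ℝ hg
  have hfin := hin.const_mul (k / 2)
  have heq : (fun t : ℝ => (k / 2) * ⟪mv (Rhat t)ᵀ y0 - y, mv (Rhat t)ᵀ y0 - y⟫)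
      = fun t : ℝ => (k / 2) * ‖mv (Rhat t)ᵀ y0 - y‖ ^ 2 := by
    funext t; rw [real_inner_self_eq_norm_sq]
  rw [heq] at hfin
  refine hfin.congr_deriv (Eq.symm ?_)
  subst hyhat
  simp only [mv, Matrix.transpose_mul, ← Matrix.mulVec_mulVec]
  set v : EuclideanSpace ℝ (Fin 3) := WithLp.toLp 2 ((Rhat t0)ᵀ *ᵥ y0.ofLp) with hv
  show k * ⟪Ω, cross v y⟫ = _
  have hsk : (skew Ω)ᵀ = !![0, Ω 2, -Ω 1; -Ω 2, 0, Ω 0; Ω 1, -Ω 0, 0] := by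
    ext i j; fin_cases i <;> fin_cases j <;> simp [skew]
  rw [hsk]
  simp [hv, cross, crossProduct, PiLp.inner_apply, RCLike.inner_apply, conj_trivial,
    Fin.sum_univ_three, skew, Matrix.mulVec_transpose, Matrix.vecMul, Matrix.mulVec, dotProduct, PiLp.sub_apply]
  ring
end

section
/- Let Ω, y : ℝ → ℝ³, k ∈ ℝ, y0 ∈ ℝ³, and let R̂ : ℝ → Matrix (Fin 3) (Fin 3) ℝ satisfy the lifted observer equation HasDerivAt R̂ (R̂ t * (skew (Ω t) + k • skew (y t × ((R̂ t)ᵀ *ᵥ y0)))) t for all t ∈ ℝ, where skew ω is the skew-symmetric matrix with skew ω *ᵥ z = ω × z. Then the projected estimate ŷ : ℝ → ℝ³, ŷ t = (R̂ t)ᵀ *ᵥ y0, satisfies the observer equation on the sphere: HasDerivAt ŷ (-(Ω t × ŷ t) + k • ((ŷ t × y t) × ŷ t)) t for all t ∈ ℝ. -/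
open Matrix RealInnerProductSpace

attribute [local instance] Matrix.normedAddCommGroup Matrix.normedSpace

/-- The explicit complementary filter
`R̂' = R̂ ((Ω)× + k (y × R̂ᵀ y0)×)` on SO(3) projects via `ŷ = R̂ᵀ y0` to the gradient
observer `ŷ' = -Ω × ŷ + k (ŷ × y) × ŷ` on the sphere. -/
theorem lifted_observer_projects_to_sphere_observer
    (Ω y : ℝ → EuclideanSpace ℝ (Fin 3)) (k : ℝ) (y0 : EuclideanSpace ℝ (Fin 3))
    (Rhat : ℝ → Matrix (Fin 3) (Fin 3) ℝ)
    (hR : ∀ t : ℝ,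
      HasDerivAt Rhat
        (Rhat t * (skew (Ω t) + k • skew (cross (y t) (mv (Rhat t)ᵀ y0)))) t)
    (yhat : ℝ → EuclideanSpace ℝ (Fin 3))
    (hyhat : ∀ t : ℝ, yhat t = mv (Rhat t)ᵀ y0) :
    ∀ t : ℝ,
      HasDerivAt yhat
        (-(cross (Ω t) (yhat t)) + k • cross (cross (yhat t) (y t)) (yhat t)) t := by
  intro t
  let L : Matrix (Fin 3) (Fin 3) ℝ →ₗ[ℝ] EuclideanSpace ℝ (Fin 3) :=
    { toFun := fun A => mv Aᵀ y0
      map_add' := by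
        intro A B
        ext i
        simp [mv, Matrix.transpose_add, Matrix.add_mulVec]
      map_smul' := by
        intro c A
        ext i
        simp [mv, Matrix.transpose_smul, Matrix.smul_mulVec] }
  have hcomp :
      HasDerivAt (fun s => L (Rhat s))
        (L (Rhat t * (skew (Ω t) + k • skew (cross (y t) (mv (Rhat t)ᵀ y0))))) t :=
    (L.toContinuousLinearMap.hasFDerivAt.comp_hasDerivAt t (hR t))
  have hfun : (fun s => L (Rhat s)) = yhat := by
    funext s; rw [hyhat s]; rfl
  rw [hfun] at hcomp
  convert hcomp using 1
  ext i
  rw [hyhat t]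
  fin_cases i <;>
    simp [L, mv, skew, cross, crossProduct, Matrix.mulVec, Matrix.transpose,
      Matrix.mul_apply, Fin.sum_univ_three, dotProduct, PiLp.add_apply, PiLp.smul_apply,
      PiLp.neg_apply, Matrix.add_apply, Matrix.smul_apply] <;>
    ring
end
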